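/- Let T := { (z₁, z₂) ∈ ℝ² : 0 < z₁, 0 < z₂, z₁ + z₂ < π/2 }, let V(z₁, z₂) := ( sin(2z₁ + 2z₂) − sin(2z₂), sin(2z₁) − sin(2z₁ + 2z₂) ), and let E(z₁, z₂) := cos(2z₁) + cos(2z₂) − cos(2z₁ + 2z₂). Then: (i) for every differentiable curve z : ℝ → ℝ² with z(t) ∈ T and z'(t) = V(z(t)) for all t ∈ ℝ, the function t ↦ E(z(t)) is constant; (ii) a point z ∈ T satisfies V(z) = 0 if and only if z = (π/6, π/6), and E(z) ≤ 3/2 for all z ∈ T with equality exactly at (π/6, π/6); (iii) every differentiable z : ℝ → ℝ² with z(t) ∈ T and z'(t) = V(z(t)) for all t, and with z(0) ≠ (π/6, π/6), is periodic: there exists τ > 0 such that z(t + τ) = z(t) for all t ∈ ℝ. -/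

import Mathlib

open Real Set

noncomputable section

/-- The open triangle `T = {(z₁,z₂) : 0 < z₁, 0 < z₂, z₁ + z₂ < π/2}`. -/
def triT : Set (ℝ × ℝ) :=
  {z : ℝ × ℝ | 0 < z.1 ∧ 0 < z.2 ∧ z.1 + z.2 < Real.pi / 2}

/-- The vector field of the three-point-vortex gap system. -/
def gapField (z : ℝ × ℝ) : ℝ × ℝ :=
  (Real.sin (2 * z.1 + 2 * z.2) - Real.sin (2 * z.2),
    Real.sin (2 * z.1) - Real.sin (2 * z.1 + 2 * z.2))

/-- The Hamiltonian `E(z₁,z₂) = cos(2z₁) + cos(2z₂) − cos(2z₁ + 2z₂)`. -/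
def gapEnergy (z : ℝ × ℝ) : ℝ :=
  Real.cos (2 * z.1) + Real.cos (2 * z.2) - Real.cos (2 * z.1 + 2 * z.2)

/-!
Since `V = ½ (∂₂E, -∂₁E)`, the energy `E` is a first integral; it equals `1` on the boundary of
`T`, exceeds `1` inside, and attains `3/2` only at `(π/6, π/6)`. In the coordinates
`u = z₁ - z₂`, `v = z₁ + z₂` one has `v' = 2 sin u cos v` and `E = 1 + 2 cos v (cos u - cos v)`.
If a non-stationary orbit stopped crossing the diagonal `u = 0`, then `v` would be monotone, hence
convergent, and the energy relation would make `|u|`, hence `z`, converge too. The limit would be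
an equilibrium in the closed triangle with energy in `(1, 3/2)`, and there is none. So the orbit
meets the diagonal at arbitrarily late times. The field is reversible for the reflection
`(z₁, z₂) ↦ (z₂, z₁)`, so by uniqueness the orbit is symmetric about every crossing time, and the
symmetries about two crossing times `a < b` compose to the period `2 (b - a)`.
-/

open Filter Topology

section General

variable {𝕜 E F : Type*} [NontriviallyNormedField 𝕜] [NormedAddCommGroup E] [NormedSpace 𝕜 E]
  [NormedAddCommGroup F] [NormedSpace 𝕜 F] {f : 𝕜 → E × F} {f' : E × F} {x : 𝕜}

theorem HasDerivAt.fst (h : HasDerivAt f f' x) : HasDerivAt (fun s => (f s).1) f'.1 x :=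
  (ContinuousLinearMap.fst 𝕜 E F).hasFDerivAt.comp_hasDerivAt x h

theorem HasDerivAt.snd (h : HasDerivAt f f' x) : HasDerivAt (fun s => (f s).2) f'.2 x :=
  (ContinuousLinearMap.snd 𝕜 E F).hasFDerivAt.comp_hasDerivAt x h

theorem HasDerivAt.swap (h : HasDerivAt f f' x) : HasDerivAt (fun s => (f s).swap) f'.swap x :=
  h.snd.prodMk h.fst

end General

theorem IsPreconnected.forall_pos_or_forall_neg {α : Type*} [TopologicalSpace α] {s : Set α}
    {f : α → ℝ} (hs : IsPreconnected s) (hf : ContinuousOn f s) (h0 : ∀ x ∈ s, f x ≠ 0) :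
    (∀ x ∈ s, 0 < f x) ∨ (∀ x ∈ s, f x < 0) := by
  by_contra! h
  obtain ⟨⟨a, ha, hfa⟩, b, hb, hfb⟩ := h
  obtain ⟨c, hc, hfc⟩ := hs.intermediate_value ha hb hf ⟨hfa, hfb⟩
  exact h0 c hc hfc

theorem MonotoneOn.exists_tendsto_atTop {ι α : Type*} [LinearOrder ι]
    [ConditionallyCompleteLinearOrder α] [TopologicalSpace α] [OrderTopology α] {f : ι → α}
    {a : ι} (hf : MonotoneOn f (Ici a)) (hb : BddAbove (f '' Ici a)) :
    ∃ L, Tendsto f atTop (𝓝 L) := by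
  have hg : Monotone fun t => f (max a t) := fun s t hst =>
    hf le_sup_left le_sup_left (max_le_max le_rfl hst)
  refine ⟨_, (tendsto_atTop_ciSup hg (hb.mono ?_)).congr' ?_⟩
  · rintro _ ⟨t, rfl⟩
    exact ⟨max a t, le_sup_left, rfl⟩
  · filter_upwards [eventually_ge_atTop a] with t ht
    rw [max_eq_right ht]

theorem AntitoneOn.exists_tendsto_atTop {ι α : Type*} [LinearOrder ι]
    [ConditionallyCompleteLinearOrder α] [TopologicalSpace α] [OrderTopology α] {f : ι → α}
    {a : ι} (hf : AntitoneOn f (Ici a)) (hb : BddBelow (f '' Ici a)) :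
    ∃ L, Tendsto f atTop (𝓝 L) :=
  MonotoneOn.exists_tendsto_atTop (α := αᵒᵈ) hf.dual_right hb

theorem eq_zero_of_tendsto_of_hasDerivAt {E : Type*} [NormedAddCommGroup E] [NormedSpace ℝ E]
    {f f' : ℝ → E} {p c : E} (hf : ∀ t, HasDerivAt f (f' t) t) (hfp : Tendsto f atTop (𝓝 p))
    (hf' : Tendsto f' atTop (𝓝 c)) : c = 0 := by
  have h0 : Tendsto (fun t => f (t + 1) - f t) atTop (𝓝 0) := by
    simpa using (hfp.comp (tendsto_atTop_add_const_right _ 1 tendsto_id)).sub hfp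
  refine tendsto_nhds_unique (Metric.tendsto_atTop.2 fun η hη => ?_) h0
  obtain ⟨T, hT⟩ := Metric.tendsto_atTop.1 hf' (η / 2) (half_pos hη)
  refine ⟨T, fun t ht => ?_⟩
  have hmvt := norm_image_sub_le_of_norm_deriv_le_segment' (a := t) (b := t + 1)
    (f := fun s => f s - s • c) (f' := fun s => f' s - c) (C := η / 2)
    (fun s _ => ((hf s).sub ((hasDerivAt_id s).smul_const c)).hasDerivWithinAt.congr_deriv
      (by simp))
    (fun s hs => (dist_eq_norm (f' s) c ▸ hT s (ht.trans hs.1)).le) (t + 1)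
    (right_mem_Icc.2 (by linarith))
  rw [dist_eq_norm]
  calc ‖f (t + 1) - f t - c‖ = ‖f (t + 1) - (t + 1) • c - (f t - t • c)‖ := by
        congr 1; rw [add_smul, one_smul]; abel
    _ ≤ η / 2 * (t + 1 - t) := hmvt
    _ < η := by linarith

theorem Real.eq_of_sin_eq_sin {a b : ℝ} (ha : 0 < a) (hb : 0 < b) (hab : a + b < π)
    (h : sin a = sin b) : a = b := by
  have hc : cos ((a + b) / 2) ≠ 0 := (cos_pos_of_mem_Ioo ⟨by linarith, by linarith⟩).ne'
  have hs : sin ((a - b) / 2) = 0 := by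
    have := sub_eq_zero.2 h
    rw [sin_sub_sin] at this
    simpa [hc] using this
  linarith [(sin_eq_zero_iff_of_lt_of_lt (by linarith) (by linarith)).1 hs]

theorem gapEnergy_eq_one_add_sin_mul (w : ℝ × ℝ) :
    gapEnergy w = 1 + 4 * sin w.1 * sin w.2 * cos (w.1 + w.2) := by
  rw [gapEnergy, show 2 * w.1 + 2 * w.2 = 2 * (w.1 + w.2) by ring, cos_two_mul, cos_two_mul,
    cos_two_mul, cos_add]
  linear_combination (2 - 2 * cos w.2 ^ 2) * sin_sq_add_cos_sq w.1
    + 2 * sin w.1 ^ 2 * sin_sq_add_cos_sq w.2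

theorem gapEnergy_eq_one_add_cos_mul (w : ℝ × ℝ) :
    gapEnergy w = 1 + 2 * cos (w.1 + w.2) * (cos (w.1 - w.2) - cos (w.1 + w.2)) := by
  rw [gapEnergy_eq_one_add_sin_mul, cos_sub, cos_add]
  ring

theorem gapEnergy_eq_three_halves_sub (w : ℝ × ℝ) :
    gapEnergy w = 3 / 2 -
      ((cos (2 * w.1) + cos (2 * w.2) - 1) ^ 2 + (sin (2 * w.1) - sin (2 * w.2)) ^ 2) / 2 := by
  rw [gapEnergy, cos_add]
  linear_combination (1 / 2) * sin_sq_add_cos_sq (2 * w.1) + (1 / 2) * sin_sq_add_cos_sq (2 * w.2)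

theorem cos_add_pos_of_mem_triT {w : ℝ × ℝ} (hw : w ∈ triT) : 0 < cos (w.1 + w.2) :=
  cos_pos_of_mem_Ioo ⟨by linarith [hw.1, hw.2.1, pi_pos], hw.2.2⟩

theorem abs_sub_lt_of_mem_triT {w : ℝ × ℝ} (hw : w ∈ triT) : |w.1 - w.2| < π / 2 :=
  abs_sub_lt_iff.2 ⟨by linarith [hw.1, hw.2.1, hw.2.2], by linarith [hw.1, hw.2.1, hw.2.2]⟩

theorem one_lt_gapEnergy {w : ℝ × ℝ} (hw : w ∈ triT) : 1 < gapEnergy w := by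
  have s1 : 0 < sin w.1 := sin_pos_of_pos_of_lt_pi hw.1 (by linarith [hw.2.1, hw.2.2, pi_pos])
  have s2 : 0 < sin w.2 := sin_pos_of_pos_of_lt_pi hw.2.1 (by linarith [hw.1, hw.2.2, pi_pos])
  have c12 := cos_add_pos_of_mem_triT hw
  rw [gapEnergy_eq_one_add_sin_mul]
  linarith [show 0 < 4 * sin w.1 * sin w.2 * cos (w.1 + w.2) by positivity]

theorem mem_triT_of_mem_closure_of_one_lt_gapEnergy {p : ℝ × ℝ} (hp : p ∈ closure triT)
    (hE : 1 < gapEnergy p) : p ∈ triT := by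
  have hclosed : IsClosed {z : ℝ × ℝ | 0 ≤ z.1 ∧ 0 ≤ z.2 ∧ z.1 + z.2 ≤ π / 2} :=
    (isClosed_le continuous_const continuous_fst).inter
      ((isClosed_le continuous_const continuous_snd).inter
        (isClosed_le (continuous_fst.add continuous_snd) continuous_const))
  have hsub : triT ⊆ {z : ℝ × ℝ | 0 ≤ z.1 ∧ 0 ≤ z.2 ∧ z.1 + z.2 ≤ π / 2} :=
    fun z hz => ⟨hz.1.le, hz.2.1.le, hz.2.2.le⟩
  obtain ⟨h1, h2, h3⟩ := closure_minimal hsub hclosed hp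
  rw [gapEnergy_eq_one_add_sin_mul] at hE
  refine ⟨h1.lt_of_ne ?_, h2.lt_of_ne ?_, h3.lt_of_ne ?_⟩ <;> rintro h
  · simp [← h] at hE
  · simp [← h] at hE
  · simp [h] at hE

theorem eq_center_of_fst_eq_snd {w : ℝ × ℝ} (hw : w ∈ triT) (h12 : w.1 = w.2)
    (hcos : cos (2 * w.1) = 1 / 2) : w = (π / 6, π / 6) := by
  obtain ⟨h1, -, h3⟩ := hw
  have : 2 * w.1 = π / 3 := injOn_cos ⟨by linarith, by linarith⟩
    ⟨by positivity, by linarith [pi_pos]⟩ (hcos.trans cos_pi_div_three.symm)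
  exact Prod.ext (by simp; linarith) (by simp; linarith)

theorem fst_eq_snd_of_sin_eq_sin {w : ℝ × ℝ} (hw : w ∈ triT)
    (h : sin (2 * w.1) = sin (2 * w.2)) : w.1 = w.2 := by
  obtain ⟨h1, h2, h3⟩ := hw
  linarith [eq_of_sin_eq_sin (by linarith) (by linarith) (by linarith) h]

theorem gapField_center : gapField (π / 6, π / 6) = 0 := by
  rw [gapField, show 2 * (π / 6) + 2 * (π / 6) = π - π / 3 by ring, sin_pi_sub,
    show 2 * (π / 6) = π / 3 by ring]
  simp

theorem gapEnergy_center : gapEnergy (π / 6, π / 6) = 3 / 2 := by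
  rw [gapEnergy, show 2 * (π / 6) + 2 * (π / 6) = π - π / 3 by ring, cos_pi_sub,
    show 2 * (π / 6) = π / 3 by ring, cos_pi_div_three]
  norm_num

theorem gapField_eq_zero_iff {w : ℝ × ℝ} (hw : w ∈ triT) :
    gapField w = 0 ↔ w = (π / 6, π / 6) := by
  refine ⟨fun h => ?_, fun h => h ▸ gapField_center⟩
  have e1 : sin (2 * w.1 + 2 * w.2) = sin (2 * w.2) := sub_eq_zero.1 (congrArg Prod.fst h)
  have e2 : sin (2 * w.1) = sin (2 * w.1 + 2 * w.2) := sub_eq_zero.1 (congrArg Prod.snd h)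
  have h12 := fst_eq_snd_of_sin_eq_sin hw (e2.trans e1)
  have hs : 0 < sin (2 * w.1) :=
    sin_pos_of_pos_of_lt_pi (by linarith [hw.1]) (by linarith [hw.2.2, pi_pos])
  -- on the diagonal, `sin (4 w₁) = sin (2 w₁)` and `sin (4 w₁) = 2 sin (2 w₁) cos (2 w₁)`
  have hdouble : sin (2 * w.1) = 2 * sin (2 * w.1) * cos (2 * w.1) := by
    rw [← sin_two_mul, e2, ← h12]; ring_nf
  refine eq_center_of_fst_eq_snd hw h12 ?_
  field_simp at hdouble
  linarith

theorem gapEnergy_le_three_halves (w : ℝ × ℝ) : gapEnergy w ≤ 3 / 2 := by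
  rw [gapEnergy_eq_three_halves_sub]
  nlinarith [sq_nonneg (cos (2 * w.1) + cos (2 * w.2) - 1),
    sq_nonneg (sin (2 * w.1) - sin (2 * w.2))]

theorem gapEnergy_eq_three_halves_iff {w : ℝ × ℝ} (hw : w ∈ triT) :
    gapEnergy w = 3 / 2 ↔ w = (π / 6, π / 6) := by
  refine ⟨fun h => ?_, fun h => h ▸ gapEnergy_center⟩
  rw [gapEnergy_eq_three_halves_sub] at h
  have hc : cos (2 * w.1) + cos (2 * w.2) - 1 = 0 := by
    nlinarith [sq_nonneg (cos (2 * w.1) + cos (2 * w.2) - 1),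
      sq_nonneg (sin (2 * w.1) - sin (2 * w.2))]
  have hs : sin (2 * w.1) - sin (2 * w.2) = 0 := by
    nlinarith [sq_nonneg (cos (2 * w.1) + cos (2 * w.2) - 1),
      sq_nonneg (sin (2 * w.1) - sin (2 * w.2))]
  have h12 := fst_eq_snd_of_sin_eq_sin hw (sub_eq_zero.1 hs)
  exact eq_center_of_fst_eq_snd hw h12 (by rw [← h12] at hc; linarith)

theorem gapField_fst_add_snd (w : ℝ × ℝ) :
    (gapField w).1 + (gapField w).2 = 2 * sin (w.1 - w.2) * cos (w.1 + w.2) := by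
  rw [gapField]
  dsimp only
  rw [show sin (2 * w.1 + 2 * w.2) - sin (2 * w.2) + (sin (2 * w.1) - sin (2 * w.1 + 2 * w.2))
    = sin (2 * w.1) - sin (2 * w.2) by ring, sin_sub_sin]
  ring_nf

theorem gapField_swap (w : ℝ × ℝ) : gapField w.swap = -(gapField w).swap := by
  ext <;> simp only [gapField, Prod.fst_swap, Prod.snd_swap, Prod.fst_neg, Prod.snd_neg] <;> ring_nf

theorem gapField_lipschitzWith : ∃ K, LipschitzWith K gapField := by
  have hsin (L : ℝ × ℝ →L[ℝ] ℝ) : LipschitzWith (1 * ‖L‖₊) fun w => sin (L w) :=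
    lipschitzWith_sin.comp L.lipschitz
  let A := ContinuousLinearMap.fst ℝ ℝ ℝ
  let B := ContinuousLinearMap.snd ℝ ℝ ℝ
  have h := ((hsin (2 • A + 2 • B)).sub (hsin (2 • B))).prodMk
    ((hsin (2 • A)).sub (hsin (2 • A + 2 • B)))
  exact ⟨_, by convert h using 1; funext w; simp [gapField, A, B]⟩

theorem continuous_gapField : Continuous gapField := by
  unfold gapField
  fun_prop

theorem continuous_gapEnergy : Continuous gapEnergy := by
  unfold gapEnergy
  fun_prop

section Solutions

variable {z : ℝ → ℝ × ℝ}

theorem hasDerivAt_gapEnergy_comp {z' : ℝ × ℝ} {t : ℝ} (hz : HasDerivAt z z' t) :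
    HasDerivAt (fun s => gapEnergy (z s))
      (-(sin (2 * (z t).1) * (2 * z'.1)) - sin (2 * (z t).2) * (2 * z'.2)
        + sin (2 * (z t).1 + 2 * (z t).2) * (2 * z'.1 + 2 * z'.2)) t := by
  have h1 := hz.fst.const_mul 2
  have h2 := hz.snd.const_mul 2
  exact ((h1.cos.fun_add h2.cos).fun_sub (h1.fun_add h2).cos).congr_deriv (by ring)

theorem gapEnergy_comp_eq (hz : ∀ t, HasDerivAt z (gapField (z t)) t) (t t' : ℝ) :
    gapEnergy (z t) = gapEnergy (z t') := by
  have hE (t : ℝ) : HasDerivAt (fun s => gapEnergy (z s)) 0 t := by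
    convert hasDerivAt_gapEnergy_comp (hz t) using 1
    simp only [gapField]
    ring
  exact is_const_of_deriv_eq_zero (fun t => (hE t).differentiableAt) (fun t => (hE t).deriv) t t'

theorem gapField_solution_unique {y : ℝ → ℝ × ℝ} (hz : ∀ t, HasDerivAt z (gapField (z t)) t)
    (hy : ∀ t, HasDerivAt y (gapField (y t)) t) {a : ℝ} (h : z a = y a) : z = y :=
  have ⟨_, hK⟩ := gapField_lipschitzWith
  ODE_solution_unique_univ (v := fun _ => gapField) (s := fun _ => univ)
    (fun _ => hK.lipschitzOnWith) (fun t => ⟨hz t, trivial⟩) (fun t => ⟨hy t, trivial⟩) h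

theorem hasDerivAt_swap_comp_const_sub (hz : ∀ t, HasDerivAt z (gapField (z t)) t)
    (a t : ℝ) : HasDerivAt (fun s => (z (a - s)).swap) (gapField (z (a - t)).swap) t := by
  rw [gapField_swap]
  convert ((hz (a - t)).comp_const_sub a t).swap using 1
  simp

theorem eq_swap_comp_reflect (hz : ∀ t, HasDerivAt z (gapField (z t)) t) {a : ℝ}
    (ha : (z a).1 = (z a).2) : ∀ t, z t = (z (2 * a - t)).swap := by
  refine congrFun (gapField_solution_unique hz (hasDerivAt_swap_comp_const_sub hz (2 * a))
    (a := a) ?_)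
  rw [show 2 * a - a = a by ring]
  exact Prod.ext ha ha.symm

end Solutions

theorem Function.periodic_of_eq_comp_reflect {α : Type*} {f : ℝ → α} {σ : α → α} {a b : ℝ}
    (ha : ∀ t, f t = σ (f (2 * a - t))) (hb : ∀ t, f t = σ (f (2 * b - t))) :
    Function.Periodic f (2 * (b - a)) := fun t => by
  rw [hb, ha t]
  congr 2
  ring

section Convergence

variable {z : ℝ → ℝ × ℝ}

theorem exists_tendsto_fst_add_snd (hT : ∀ t, z t ∈ triT)
    (hz : ∀ t, HasDerivAt z (gapField (z t)) t) {T₀ : ℝ}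
    (hsign : (∀ t ∈ Ici T₀, 0 < (z t).1 - (z t).2) ∨ (∀ t ∈ Ici T₀, (z t).1 - (z t).2 < 0)) :
    ∃ L, Tendsto (fun t => (z t).1 + (z t).2) atTop (𝓝 L) := by
  set v := fun t => (z t).1 + (z t).2
  have hv (t : ℝ) : HasDerivAt v (2 * sin ((z t).1 - (z t).2) * cos (v t)) t :=
    gapField_fst_add_snd (z t) ▸ (hz t).fst.fun_add (hz t).snd
  have hcont : ContinuousOn v (Ici T₀) := fun t _ => (hv t).continuousAt.continuousWithinAt
  have hv' (t : ℝ) : HasDerivWithinAt v _ (interior (Ici T₀)) t := (hv t).hasDerivWithinAt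
  have hcos (t : ℝ) : 0 < cos (v t) := cos_add_pos_of_mem_triT (hT t)
  have hu (t : ℝ) := abs_lt.1 (abs_sub_lt_of_mem_triT (hT t))
  rcases hsign with hpos | hneg
  · refine MonotoneOn.exists_tendsto_atTop
      (monotoneOn_of_hasDerivWithinAt_nonneg (convex_Ici T₀) hcont (fun t _ => hv' t)
        fun t ht => ?_) ⟨π / 2, ?_⟩
    · have := sin_pos_of_pos_of_lt_pi (hpos t (interior_subset ht))
        (by linarith [(hu t).2, pi_pos])
      have := hcos t
      positivity
    · rintro _ ⟨t, -, rfl⟩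
      exact (hT t).2.2.le
  · refine AntitoneOn.exists_tendsto_atTop
      (antitoneOn_of_hasDerivWithinAt_nonpos (convex_Ici T₀) hcont (fun t _ => hv' t)
        fun t ht => ?_) ⟨0, ?_⟩
    · have := sin_neg_of_neg_of_neg_pi_lt (hneg t (interior_subset ht))
        (by linarith [(hu t).1, pi_pos])
      nlinarith [hcos t]
    · rintro _ ⟨t, -, rfl⟩
      linarith [(hT t).1, (hT t).2.1]

theorem exists_tendsto_abs_fst_sub_snd (hT : ∀ t, z t ∈ triT)
    (hz : ∀ t, HasDerivAt z (gapField (z t)) t) {L : ℝ}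
    (hL : Tendsto (fun t => (z t).1 + (z t).2) atTop (𝓝 L)) :
    ∃ M, Tendsto (fun t => |(z t).1 - (z t).2|) atTop (𝓝 M) := by
  set ε := gapEnergy (z 0) - 1
  have hε : 0 < ε := sub_pos.2 (one_lt_gapEnergy (hT 0))
  have hcos (t : ℝ) := cos_add_pos_of_mem_triT (hT t)
  have hE (t : ℝ) :
      2 * cos ((z t).1 + (z t).2) * (cos ((z t).1 - (z t).2) - cos ((z t).1 + (z t).2)) = ε := by
    linarith [gapEnergy_eq_one_add_cos_mul (z t), gapEnergy_comp_eq hz t 0]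
  have hcv : Tendsto (fun t => cos ((z t).1 + (z t).2)) atTop (𝓝 (cos L)) :=
    (continuous_cos.tendsto L).comp hL
  -- the energy keeps `cos (z₁ + z₂)` away from `0`, making `cos (z₁ - z₂)` a continuous function
  -- of it
  have hcosL : 0 < cos L := by
    refine lt_of_lt_of_le (half_pos hε) (ge_of_tendsto hcv (Eventually.of_forall fun t => ?_))
    nlinarith [hE t, hcos t, cos_le_one ((z t).1 - (z t).2)]
  have hcu : Tendsto (fun t => cos ((z t).1 - (z t).2)) atTop
      (𝓝 (cos L + ε / (2 * cos L))) := by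
    refine (hcv.add (tendsto_const_nhds.div (hcv.const_mul 2) (by positivity))).congr fun t => ?_
    have := (hcos t).ne'
    simp only [Pi.div_apply]
    field_simp
    linarith [hE t]
  refine ⟨_, ((continuous_arccos.tendsto _).comp hcu).congr fun t => ?_⟩
  rw [Function.comp_apply, ← cos_abs,
    arccos_cos (abs_nonneg _) (by linarith [abs_sub_lt_of_mem_triT (hT t), pi_pos])]

theorem exists_tendsto_of_fst_sub_snd_pos_or_neg (hT : ∀ t, z t ∈ triT)
    (hz : ∀ t, HasDerivAt z (gapField (z t)) t) {T₀ : ℝ}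
    (hsign : (∀ t ∈ Ici T₀, 0 < (z t).1 - (z t).2) ∨ (∀ t ∈ Ici T₀, (z t).1 - (z t).2 < 0)) :
    ∃ p, Tendsto z atTop (𝓝 p) := by
  obtain ⟨L, hL⟩ := exists_tendsto_fst_add_snd hT hz hsign
  obtain ⟨M, hM⟩ := exists_tendsto_abs_fst_sub_snd hT hz hL
  obtain ⟨N, hN⟩ : ∃ N, Tendsto (fun t => (z t).1 - (z t).2) atTop (𝓝 N) := by
    rcases hsign with h | h
    · refine ⟨M, hM.congr' ?_⟩
      filter_upwards [eventually_ge_atTop T₀] with t ht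
      exact abs_of_pos (h t ht)
    · refine ⟨-M, hM.neg.congr' ?_⟩
      filter_upwards [eventually_ge_atTop T₀] with t ht
      exact neg_eq_iff_eq_neg.2 (abs_of_neg (h t ht))
  refine ⟨((L + N) / 2, (L - N) / 2), ?_⟩
  convert ((hL.add hN).div_const 2).prodMk_nhds ((hL.sub hN).div_const 2) using 1
  funext t
  ext <;> simp only <;> ring

theorem not_tendsto_of_gapEnergy_lt (hT : ∀ t, z t ∈ triT)
    (hz : ∀ t, HasDerivAt z (gapField (z t)) t) (hE : gapEnergy (z 0) < 3 / 2) (p : ℝ × ℝ) :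
    ¬ Tendsto z atTop (𝓝 p) := by
  intro hp
  have hV : gapField p = 0 :=
    eq_zero_of_tendsto_of_hasDerivAt hz hp ((continuous_gapField.tendsto p).comp hp)
  have hEp : gapEnergy p = gapEnergy (z 0) :=
    tendsto_nhds_unique ((continuous_gapEnergy.tendsto p).comp hp)
      (tendsto_const_nhds.congr fun t => gapEnergy_comp_eq hz 0 t)
  have hp_mem : p ∈ triT := mem_triT_of_mem_closure_of_one_lt_gapEnergy
    (mem_closure_of_tendsto hp (Eventually.of_forall hT)) (hEp ▸ one_lt_gapEnergy (hT 0))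
  have := gapEnergy_center
  rw [← (gapField_eq_zero_iff hp_mem).1 hV, hEp] at this
  linarith

theorem exists_ge_fst_eq_snd (hT : ∀ t, z t ∈ triT)
    (hz : ∀ t, HasDerivAt z (gapField (z t)) t) (hE : gapEnergy (z 0) < 3 / 2) (T₀ : ℝ) :
    ∃ t ≥ T₀, (z t).1 = (z t).2 := by
  by_contra! h
  have hcont : Continuous fun t => (z t).1 - (z t).2 := by
    have : Continuous z := continuous_iff_continuousAt.2 fun t => (hz t).continuousAt
    fun_prop
  obtain ⟨p, hp⟩ := exists_tendsto_of_fst_sub_snd_pos_or_neg hT hz <|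
    isPreconnected_Ici.forall_pos_or_forall_neg hcont.continuousOn fun t ht =>
      sub_ne_zero.2 (h t ht)
  exact not_tendsto_of_gapEnergy_lt hT hz hE p hp

end Convergence

/-- The three-point-vortex gap system is a completely integrable Hamiltonian system:
(i) `E` is a first integral; (ii) the only stationary point in `T` is `(π/6, π/6)`,
where `E` attains its strict maximum `3/2`; (iii) every non-stationary solution staying
in `T` is periodic. -/
theorem gap_system_integrable :
    (∀ z : ℝ → ℝ × ℝ, (∀ t, z t ∈ triT) → (∀ t, HasDerivAt z (gapField (z t)) t) →
      ∀ t t' : ℝ, gapEnergy (z t) = gapEnergy (z t')) ∧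
    ((∀ w ∈ triT, (gapField w = 0 ↔ w = (Real.pi / 6, Real.pi / 6))) ∧
      ∀ w ∈ triT, gapEnergy w ≤ 3 / 2 ∧
        (gapEnergy w = 3 / 2 ↔ w = (Real.pi / 6, Real.pi / 6))) ∧
    (∀ z : ℝ → ℝ × ℝ, (∀ t, z t ∈ triT) → (∀ t, HasDerivAt z (gapField (z t)) t) →
      z 0 ≠ (Real.pi / 6, Real.pi / 6) →
      ∃ τ : ℝ, 0 < τ ∧ ∀ t : ℝ, z (t + τ) = z t) := by
  refine ⟨fun z _ hz => gapEnergy_comp_eq hz, ⟨fun w hw => gapField_eq_zero_iff hw,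
    fun w hw => ⟨gapEnergy_le_three_halves w, gapEnergy_eq_three_halves_iff hw⟩⟩, ?_⟩
  intro z hT hz h0
  have hE : gapEnergy (z 0) < 3 / 2 :=
    (gapEnergy_le_three_halves _).lt_of_ne (mt (gapEnergy_eq_three_halves_iff (hT 0)).1 h0)
  obtain ⟨a, -, ha⟩ := exists_ge_fst_eq_snd hT hz hE 0
  obtain ⟨b, hb, hb'⟩ := exists_ge_fst_eq_snd hT hz hE (a + 1)
  exact ⟨2 * (b - a), by linarith, Function.periodic_of_eq_comp_reflect
    (eq_swap_comp_reflect hz ha) (eq_swap_comp_reflect hz hb')⟩
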